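/- arXiv:2402.05884 — 2 statements merged into one kernel-verified Lean document; each statement's English description precedes it below -/
import Mathlib

section
/- Let G = (V,E) be a finite connected graph that admits a generalized cutset C = {C_1, ..., C_t} with pass-through numbers τ = (τ_1, ..., τ_t), valence Στ, gap r ≥ 2, and witness partition H = {H_1, ..., H_{Στ+r}}. Then for every integer n with Στ < n < Στ + r, there exists a common monotone valuation v for n agents such that no connected EF1 allocation of G among the n agents exists (hence no connected EF1-outer allocation exists). -/
open Finset

variable {V : Type*}

/-- A piece of an allocation: either empty or inducing a connected subgraph. -/
def ConnPiece (G : SimpleGraph V) (S : Finset V) : Prop :=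
  S = ∅ ∨ (G.induce (S : Set V)).Connected

/-- A connected allocation: a partition of `V` into `n` pieces, each connected. -/
def IsConnAlloc (G : SimpleGraph V) {n : ℕ} (A : Fin n → Finset V) : Prop :=
  (∀ x : V, ∃! i, x ∈ A i) ∧ ∀ i, ConnPiece G (A i)

def IsMonotoneVal (v : Finset V → ℝ) : Prop :=
  v ∅ = 0 ∧ (∀ S, 0 ≤ v S) ∧ ∀ S T : Finset V, S ⊆ T → v S ≤ v T

def IsAdditiveVal (v : Finset V → ℝ) : Prop :=
  (∀ S, 0 ≤ v S) ∧ ∀ S : Finset V, v S = ∑ x ∈ S, v {x}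

def IsEF1 [DecidableEq V] {n : ℕ} (v : Fin n → Finset V → ℝ) (A : Fin n → Finset V) : Prop :=
  ∀ i j : Fin n, v i (A i) ≥ v i (A j) ∨ ∃ x ∈ A j, v i (A i) ≥ v i ((A j).erase x)

def IsEF1Outer [DecidableEq V] (G : SimpleGraph V) {n : ℕ}
    (v : Fin n → Finset V → ℝ) (A : Fin n → Finset V) : Prop :=
  ∀ i j : Fin n, v i (A i) ≥ v i (A j) ∨
    ∃ x ∈ A j, ConnPiece G ((A j).erase x) ∧ v i (A i) ≥ v i ((A j).erase x)

/-- A generalized cutset for `G`, with gap `r ≥ 2`. -/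
structure GenCutset (G : SimpleGraph V) where
  t : ℕ
  C : Fin t → Finset V
  τ : Fin t → ℕ
  r : ℕ
  r_ge : 2 ≤ r
  H : Fin ((∑ i, τ i) + r) → Finset V
  C_nonempty : ∀ i, (C i).Nonempty
  C_disjoint : ∀ i j, i ≠ j → Disjoint (C i) (C j)
  C_connected : ∀ i, (G.induce ((C i : Set V))).Connected
  H_nonempty : ∀ j, (H j).Nonempty
  H_disjoint : ∀ j k, j ≠ k → Disjoint (H j) (H k)
  H_partition : ∀ x : V, (∀ i, x ∉ C i) ↔ ∃ j, x ∈ H j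
  H_independent : ∀ j k, j ≠ k → ∀ x ∈ H j, ∀ y ∈ H k, ¬ G.Adj x y
  contact_unique : ∀ i j, ∀ x ∈ C i, ∀ y ∈ C i,
      (∃ z ∈ H j, G.Adj x z) → (∃ z ∈ H j, G.Adj y z) → x = y
  typeI_tau : ∀ i, (C i).card = 1 → τ i = 1
  typeII_indep : ∀ i i', i ≠ i' → 1 < (C i).card → 1 < (C i').card →
      ∀ x ∈ C i, ∀ y ∈ C i', ¬ G.Adj x y
  typeII_contacts : ∀ i, 1 < (C i).card →
      (∃ S : Finset (Fin ((∑ i, τ i) + r)), S.card = 2 * τ i + 1 ∧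
        ∀ j, j ∈ S ↔ ∃ x ∈ C i, ∃ z ∈ H j, G.Adj x z) ∧
      (∀ x ∈ C i, ∀ j k, (∃ z ∈ H j, G.Adj x z) → (∃ z ∈ H k, G.Adj x z) → j = k)

/-- The valence of a generalized cutset. -/
abbrev GenCutset.valence {G : SimpleGraph V} (cs : GenCutset G) : ℕ := ∑ i, cs.τ i

/-- `S` dominates a member of the cutset. -/
def GenCutset.Dominates {G : SimpleGraph V} (cs : GenCutset G)
    (S : Finset V) (i : Fin cs.t) : Prop :=
  ((cs.C i).card = 1 ∧ cs.C i ⊆ S) ∨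
  (1 < (cs.C i).card ∧ ∃ x, x ∈ cs.C i ∧ x ∈ S ∧ ∃ y, y ∈ cs.C i ∧ y ∈ S ∧ x ≠ y ∧
    (∃ j, ∃ z ∈ cs.H j, G.Adj x z) ∧ (∃ j, ∃ z ∈ cs.H j, G.Adj y z))

/-!
Let `u(S)` count the parts `H_j` that `S` meets plus the cutset members that `S` dominates.
This is a monotone valuation, and deleting one vertex lowers it by at most one, since a vertex
lies in at most one `H_j` or one `C_i`. A connected piece that meets two parts must dominate
some `C_i`, because every path between different parts passes through a singleton `C_i` or
enters and leaves a type-II member through two different contact vertices. A member `C_i` is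
dominated by at most `τ_i` pairwise disjoint pieces: a type-II member has only `2τ_i + 1`
contact vertices, and each piece dominating it uses two of them. So with more than `Στ`
pieces, some piece dominates nothing and has `u ≤ 1`. With fewer than `Στ + r` pieces, some
piece meets two parts and has `u ≥ 3`. The first piece then envies the second even after any
single vertex is removed from the second.
-/

open Function

lemma IsConnAlloc.pairwise_disjoint {G : SimpleGraph V} {n : ℕ} {A : Fin n → Finset V}
    (hA : IsConnAlloc G A) : Pairwise (Disjoint on A) := by
  intro P Q hPQ
  refine disjoint_left.mpr fun x hxP hxQ => hPQ ?_
  obtain ⟨_, _, huniq⟩ := hA.1 x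
  exact (huniq P hxP).trans (huniq Q hxQ).symm

lemma IsEF1Outer.isEF1 [DecidableEq V] {G : SimpleGraph V} {n : ℕ}
    {v : Fin n → Finset V → ℝ} {A : Fin n → Finset V} (h : IsEF1Outer G v A) : IsEF1 v A :=
  fun i j => (h i j).imp_right fun ⟨x, hx, _, hle⟩ => ⟨x, hx, hle⟩

namespace GenCutset

variable {G : SimpleGraph V} (cs : GenCutset G)

lemma exists_mem_C_or_exists_mem_H (x : V) : (∃ i, x ∈ cs.C i) ∨ ∃ j, x ∈ cs.H j := by
  by_cases h : ∃ i, x ∈ cs.C i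
  · exact .inl h
  · exact .inr ((cs.H_partition x).mp (not_exists.mp h))

lemma notMem_C_of_mem_H {x : V} {j} (hx : x ∈ cs.H j) (i : Fin cs.t) : x ∉ cs.C i :=
  (cs.H_partition x).mpr ⟨j, hx⟩ i

lemma card_C_eq_one_or_one_lt (i : Fin cs.t) : (cs.C i).card = 1 ∨ 1 < (cs.C i).card := by
  have := (cs.C_nonempty i).card_pos
  omega

variable {cs}

lemma Dominates.mono {S T : Finset V} {i} (h : cs.Dominates S i) (hST : S ⊆ T) :
    cs.Dominates T i := by
  rcases h with ⟨h1, hsub⟩ | ⟨h1, a, haC, haS, b, hbC, hbS, hab, ha, hb⟩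
  · exact .inl ⟨h1, hsub.trans hST⟩
  · exact .inr ⟨h1, a, haC, hST haS, b, hbC, hST hbS, hab, ha, hb⟩

lemma Dominates.erase [DecidableEq V] {S : Finset V} {i} (h : cs.Dominates S i) {x : V}
    (hx : x ∉ cs.C i) : cs.Dominates (S.erase x) i := by
  have keep : ∀ y ∈ cs.C i, y ∈ S → y ∈ S.erase x := fun y hy hyS =>
    mem_erase.mpr ⟨fun hyx => hx (hyx ▸ hy), hyS⟩
  rcases h with ⟨h1, hsub⟩ | ⟨h1, a, haC, haS, b, hbC, hbS, hab, ha, hb⟩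
  · exact .inl ⟨h1, fun y hy => keep y hy (hsub hy)⟩
  · exact .inr ⟨h1, a, haC, keep a haC haS, b, hbC, keep b hbC hbS, hab, ha, hb⟩

lemma not_dominates_empty (i : Fin cs.t) : ¬ cs.Dominates ∅ i := by
  rintro (⟨-, hsub⟩ | ⟨-, x, -, hx, -⟩)
  · obtain ⟨c, hc⟩ := cs.C_nonempty i
    exact notMem_empty c (hsub hc)
  · exact notMem_empty x hx

lemma dominates_of_mem_of_card_eq_one {S : Finset V} {i} {x : V} (hxC : x ∈ cs.C i)
    (h1 : (cs.C i).card = 1) (hxS : x ∈ S) : cs.Dominates S i := by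
  obtain ⟨c, hc⟩ := card_eq_one.mp h1
  rw [hc, mem_singleton] at hxC
  subst hxC
  exact .inl ⟨h1, hc ▸ singleton_subset_iff.mpr hxS⟩

variable (cs)

/-- Where a walk inside `S` starting in `H j` can be while `S` dominates no cutset member. -/
def Anchored (S : Finset V) (j : Fin (cs.valence + cs.r)) (x : V) : Prop :=
  x ∈ cs.H j ∨
    ∃ i, 1 < (cs.C i).card ∧ x ∈ cs.C i ∧ ∃ e ∈ cs.C i, e ∈ S ∧ ∃ z ∈ cs.H j, G.Adj e z

variable {cs}

lemma Anchored.of_adj {S : Finset V} (hS : ∀ i, ¬ cs.Dominates S i) {j} {x y : V}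
    (hx : cs.Anchored S j x) (hxS : x ∈ S) (hyS : y ∈ S) (hxy : G.Adj x y) :
    cs.Anchored S j y := by
  rcases cs.exists_mem_C_or_exists_mem_H y with ⟨i', hyC⟩ | ⟨k, hyH⟩
  · rcases cs.card_C_eq_one_or_one_lt i' with h1 | h2
    · exact absurd (dominates_of_mem_of_card_eq_one hyC h1 hyS) (hS i')
    rcases hx with hxH | ⟨i, hi, hxC, e, heC, heS, z, hzH, hez⟩
    · exact .inr ⟨i', h2, hyC, y, hyC, hyS, x, hxH, hxy.symm⟩
    · obtain rfl : i = i' := by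
        by_contra hne
        exact cs.typeII_indep i i' hne hi h2 x hxC y hyC hxy
      exact .inr ⟨i, hi, hyC, e, heC, heS, z, hzH, hez⟩
  · refine .inl ?_
    rcases hx with hxH | ⟨i, hi, hxC, e, heC, heS, z, hzH, hez⟩
    · obtain rfl : j = k := by
        by_contra hne
        exact cs.H_independent j k hne x hxH y hyH hxy
      exact hyH
    -- leaving `C i` through a contact vertex other than the entry one `e` dominates `C i`
    · obtain rfl : x = e := by
        by_contra hne
        exact hS i (.inr ⟨hi, x, hxC, hxS, e, heC, heS, hne, ⟨k, y, hyH, hxy⟩, ⟨j, z, hzH, hez⟩⟩)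
      obtain rfl : j = k := (cs.typeII_contacts i hi).2 x hxC j k ⟨z, hzH, hez⟩ ⟨y, hyH, hxy⟩
      exact hyH

lemma Anchored.of_walk {S : Finset V} (hS : ∀ i, ¬ cs.Dominates S i) {j}
    {x y : (S : Set V)} (w : (G.induce (S : Set V)).Walk x y) (hx : cs.Anchored S j x) :
    cs.Anchored S j y := by
  induction w with
  | nil => exact hx
  | @cons a b _ hab _ ih => exact ih (hx.of_adj hS a.2 b.2 hab)

lemma Anchored.eq_of_mem_H {S : Finset V} {j k} {y : V} (hy : cs.Anchored S j y)
    (hyH : y ∈ cs.H k) : j = k := by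
  rcases hy with hyH' | ⟨i, -, hyC, -⟩
  · by_contra hne
    exact disjoint_left.mp (cs.H_disjoint j k hne) hyH' hyH
  · exact absurd hyC (cs.notMem_C_of_mem_H hyH i)

variable (cs)

open Classical in
noncomputable def touched (S : Finset V) : Finset (Fin (cs.valence + cs.r)) :=
  univ.filter fun k => ∃ x ∈ S, x ∈ cs.H k

open Classical in
noncomputable def dominated (S : Finset V) : Finset (Fin cs.t) :=
  univ.filter fun i => cs.Dominates S i

noncomputable def valuation (S : Finset V) : ℕ :=
  (cs.touched S).card + (cs.dominated S).card

variable {cs}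

@[simp]
lemma mem_touched {S : Finset V} {k} : k ∈ cs.touched S ↔ ∃ x ∈ S, x ∈ cs.H k := by
  simp [touched]

@[simp]
lemma mem_dominated {S : Finset V} {i} : i ∈ cs.dominated S ↔ cs.Dominates S i := by
  simp [dominated]

lemma mem_touched_erase [DecidableEq V] {S : Finset V} {k} (hk : k ∈ cs.touched S) {x : V}
    (hx : x ∉ cs.H k) : k ∈ cs.touched (S.erase x) := by
  obtain ⟨y, hyS, hyH⟩ := mem_touched.mp hk
  exact mem_touched.mpr ⟨y, mem_erase.mpr ⟨fun hyx => hx (hyx ▸ hyH), hyS⟩, hyH⟩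

variable (cs)

lemma dominated_nonempty_of_one_lt_card_touched {S : Finset V} (hS : ConnPiece G S)
    (h : 1 < (cs.touched S).card) : (cs.dominated S).Nonempty := by
  obtain ⟨j, hj, k, hk, hjk⟩ := one_lt_card.mp h
  obtain ⟨a, haS, haH⟩ := mem_touched.mp hj
  obtain ⟨b, hbS, hbH⟩ := mem_touched.mp hk
  have hconn : (G.induce (S : Set V)).Connected :=
    hS.resolve_left (ne_empty_of_mem haS)
  by_contra hnone
  have hnd : ∀ i, ¬ cs.Dominates S i := fun i hi =>
    hnone ⟨i, mem_dominated.mpr hi⟩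
  obtain ⟨w⟩ := hconn.preconnected ⟨a, haS⟩ ⟨b, hbS⟩
  exact hjk ((Anchored.of_walk hnd w (.inl haH)).eq_of_mem_H hbH)

lemma valuation_empty : cs.valuation ∅ = 0 := by
  simp [valuation, touched, dominated, not_dominates_empty]

lemma valuation_mono {S T : Finset V} (hST : S ⊆ T) : cs.valuation S ≤ cs.valuation T := by
  refine Nat.add_le_add (card_le_card fun k hk => ?_) (card_le_card fun i hi => ?_)
  · obtain ⟨x, hxS, hxH⟩ := mem_touched.mp hk
    exact mem_touched.mpr ⟨x, hST hxS, hxH⟩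
  · exact mem_dominated.mpr ((mem_dominated.mp hi).mono hST)

lemma isMonotoneVal_valuation : IsMonotoneVal fun S : Finset V => (cs.valuation S : ℝ) :=
  ⟨by simp [valuation_empty], fun _ => Nat.cast_nonneg _,
    fun _ _ hST => Nat.cast_le.mpr (cs.valuation_mono hST)⟩

lemma valuation_le_valuation_erase_add_one [DecidableEq V] (S : Finset V) (x : V) :
    cs.valuation S ≤ cs.valuation (S.erase x) + 1 := by
  unfold valuation
  rcases cs.exists_mem_C_or_exists_mem_H x with ⟨i, hi⟩ | ⟨k, hk⟩
  · have ht : cs.touched S ⊆ cs.touched (S.erase x) := fun k hk =>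
      mem_touched_erase hk fun hxH => cs.notMem_C_of_mem_H hxH i hi
    have hd : cs.dominated S ⊆ insert i (cs.dominated (S.erase x)) := by
      intro i' hi'
      rcases eq_or_ne i' i with rfl | hne
      · exact mem_insert_self _ _
      · refine mem_insert_of_mem (mem_dominated.mpr ((mem_dominated.mp hi').erase ?_))
        exact fun hx => disjoint_left.mp (cs.C_disjoint i' i hne) hx hi
    have := card_le_card ht
    have := (card_le_card hd).trans (card_insert_le i _)
    omega
  · have hd : cs.dominated S ⊆ cs.dominated (S.erase x) := fun i hi =>
      mem_dominated.mpr ((mem_dominated.mp hi).erase (cs.notMem_C_of_mem_H hk i))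
    have ht : cs.touched S ⊆ insert k (cs.touched (S.erase x)) := by
      intro k' hk'
      rcases eq_or_ne k' k with rfl | hne
      · exact mem_insert_self _ _
      · exact mem_insert_of_mem
          (mem_touched_erase hk' fun hx => disjoint_left.mp (cs.H_disjoint k' k hne) hx hk)
    have := card_le_card hd
    have := (card_le_card ht).trans (card_insert_le k _)
    omega

open Classical in
noncomputable def contactParts (i : Fin cs.t) (S : Finset V) :
    Finset (Fin (cs.valence + cs.r)) :=
  univ.filter fun j => ∃ w ∈ cs.C i, w ∈ S ∧ ∃ z ∈ cs.H j, G.Adj w z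

variable {cs}

@[simp]
lemma mem_contactParts {i : Fin cs.t} {S : Finset V} {j} :
    j ∈ cs.contactParts i S ↔ ∃ w ∈ cs.C i, w ∈ S ∧ ∃ z ∈ cs.H j, G.Adj w z := by
  simp [contactParts]

lemma contactParts_mono {i : Fin cs.t} {S T : Finset V} (hST : S ⊆ T) :
    cs.contactParts i S ⊆ cs.contactParts i T := fun j hj => by
  obtain ⟨w, hwC, hwS, hw⟩ := mem_contactParts.mp hj
  exact mem_contactParts.mpr ⟨w, hwC, hST hwS, hw⟩

lemma card_contactParts_le {i : Fin cs.t} (hi : 1 < (cs.C i).card) (S : Finset V) :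
    (cs.contactParts i S).card ≤ 2 * cs.τ i + 1 := by
  obtain ⟨S₀, hcard, hmem⟩ := (cs.typeII_contacts i hi).1
  refine hcard ▸ card_le_card fun j hj => (hmem j).mpr ?_
  obtain ⟨w, hwC, -, hw⟩ := mem_contactParts.mp hj
  exact ⟨w, hwC, hw⟩

lemma disjoint_contactParts {i : Fin cs.t} {S T : Finset V} (hST : Disjoint S T) :
    Disjoint (cs.contactParts i S) (cs.contactParts i T) := by
  refine disjoint_left.mpr fun j hjS hjT => ?_
  obtain ⟨w, hwC, hwS, hw⟩ := mem_contactParts.mp hjS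
  obtain ⟨w', hwC', hwT, hw'⟩ := mem_contactParts.mp hjT
  obtain rfl := cs.contact_unique i j w hwC w' hwC' hw hw'
  exact disjoint_left.mp hST hwS hwT

lemma two_le_card_contactParts {i : Fin cs.t} (hi : 1 < (cs.C i).card) {S : Finset V}
    (h : cs.Dominates S i) : 2 ≤ (cs.contactParts i S).card := by
  rcases h with ⟨h1, -⟩ | ⟨-, x, hxC, hxS, y, hyC, hyS, hxy, ⟨j, hj⟩, ⟨k, hk⟩⟩
  · omega
  refine one_lt_card.mpr ⟨j, mem_contactParts.mpr ⟨x, hxC, hxS, hj⟩,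
    k, mem_contactParts.mpr ⟨y, hyC, hyS, hk⟩, ?_⟩
  rintro rfl
  exact hxy (cs.contact_unique i j x hxC y hyC hj hk)

lemma card_le_τ_of_dominates {ι : Type*} {A : ι → Finset V} (hA : Pairwise (Disjoint on A))
    (i : Fin cs.t) (F : Finset ι) (hF : ∀ P ∈ F, cs.Dominates (A P) i) : F.card ≤ cs.τ i := by
  rcases cs.card_C_eq_one_or_one_lt i with h1 | h2
  · obtain ⟨c, hc⟩ := card_eq_one.mp h1
    have hcA : ∀ P ∈ F, c ∈ A P := fun P hP => by
      rcases hF P hP with ⟨-, hsub⟩ | ⟨hlt, -⟩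
      · exact hsub (hc ▸ mem_singleton_self c)
      · omega
    refine cs.typeI_tau i h1 ▸ card_le_one.mpr fun P hP Q hQ => ?_
    by_contra hPQ
    exact disjoint_left.mp (hA hPQ) (hcA P hP) (hcA Q hQ)
  · classical
    have hdisj : (F : Set ι).PairwiseDisjoint fun P => cs.contactParts i (A P) :=
      fun P _ Q _ hPQ => disjoint_contactParts (hA hPQ)
    have : 2 * F.card ≤ 2 * cs.τ i + 1 := calc
      2 * F.card = ∑ _P ∈ F, 2 := by rw [sum_const, smul_eq_mul, mul_comm]
      _ ≤ ∑ P ∈ F, (cs.contactParts i (A P)).card :=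
        sum_le_sum fun P hP => two_le_card_contactParts h2 (hF P hP)
      _ = (F.biUnion fun P => cs.contactParts i (A P)).card := (card_biUnion hdisj).symm
      _ ≤ (cs.contactParts i (F.biUnion A)).card :=
        card_le_card <| biUnion_subset.mpr fun P hP =>
          contactParts_mono (subset_biUnion_of_mem A hP)
      _ ≤ 2 * cs.τ i + 1 := card_contactParts_le h2 _
    omega

variable (cs)

lemma exists_valuation_le_one {n : ℕ} {A : Fin n → Finset V} (hA : IsConnAlloc G A)
    (hn : cs.valence < n) : ∃ P, cs.valuation (A P) ≤ 1 := by
  obtain ⟨P, hP⟩ : ∃ P, cs.dominated (A P) = ∅ := by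
    by_contra! h
    choose f hf using h
    have : n ≤ cs.valence := calc
      n = (univ : Finset (Fin n)).card := by simp
      _ = ∑ i, (univ.filter fun P => f P = i).card :=
        card_eq_sum_card_fiberwise fun P _ => mem_univ (f P)
      _ ≤ ∑ i, cs.τ i := sum_le_sum fun i _ =>
        card_le_τ_of_dominates hA.pairwise_disjoint i _ fun P hP =>
          (mem_filter.mp hP).2 ▸ mem_dominated.mp (hf P)
    omega
  have : (cs.touched (A P)).card ≤ 1 := by
    by_contra! h
    simpa [hP] using cs.dominated_nonempty_of_one_lt_card_touched (hA.2 P) h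
  exact ⟨P, by simpa [valuation, hP] using this⟩

lemma exists_three_le_valuation {n : ℕ} {A : Fin n → Finset V} (hA : IsConnAlloc G A)
    (hn : n < cs.valence + cs.r) : ∃ P, 3 ≤ cs.valuation (A P) := by
  have hpiece : ∀ k, ∃ P, ∃ x ∈ A P, x ∈ cs.H k := fun k => by
    obtain ⟨x, hx⟩ := cs.H_nonempty k
    obtain ⟨P, hP, -⟩ := hA.1 x
    exact ⟨P, x, hP, hx⟩
  choose g hg using hpiece
  obtain ⟨k₁, k₂, hne, heq⟩ := Fintype.exists_ne_map_eq_of_card_lt g (by simpa using hn)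
  have htouched : 1 < (cs.touched (A (g k₁))).card :=
    one_lt_card.mpr ⟨k₁, mem_touched.mpr (hg k₁), k₂, mem_touched.mpr (heq ▸ hg k₂), hne⟩
  obtain ⟨i, hi⟩ := cs.dominated_nonempty_of_one_lt_card_touched (hA.2 _) htouched
  have := card_pos.mpr ⟨i, hi⟩
  exact ⟨g k₁, by unfold valuation; omega⟩

end GenCutset

theorem cutset_blocks_EF1_monotone_general {V : Type*} [DecidableEq V]
    (G : SimpleGraph V) (cs : GenCutset G)
    (n : ℕ) (hn₁ : cs.valence < n) (hn₂ : n < cs.valence + cs.r) :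
    ∃ v : Finset V → ℝ, IsMonotoneVal v ∧
      ∀ A : Fin n → Finset V, IsConnAlloc G A →
        ¬ IsEF1 (fun _ : Fin n => v) A ∧ ¬ IsEF1Outer G (fun _ : Fin n => v) A := by
  refine ⟨fun S => cs.valuation S, cs.isMonotoneVal_valuation, fun A hA => ?_⟩
  obtain ⟨P, hP⟩ := cs.exists_valuation_le_one hA hn₁
  obtain ⟨Q, hQ⟩ := cs.exists_three_le_valuation hA hn₂
  have hEF1 : ¬ IsEF1 (fun _ : Fin n => fun S => (cs.valuation S : ℝ)) A := fun h => by
    rcases h P Q with h | ⟨x, -, h⟩ <;> simp only [ge_iff_le, Nat.cast_le] at h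
    · omega
    · have := cs.valuation_le_valuation_erase_add_one (A Q) x
      omega
  exact ⟨hEF1, fun h => hEF1 h.isEF1⟩

/-- A generalized cutset blocks connected EF1 (hence EF1-outer) allocations,
for each number of agents `n` in the critical interval, under some common monotone valuation. -/
theorem cutset_blocks_EF1_monotone {V : Type*} [Fintype V] [DecidableEq V]
    (G : SimpleGraph V) (hG : G.Connected) (cs : GenCutset G)
    (n : ℕ) (hn₁ : cs.valence < n) (hn₂ : n < cs.valence + cs.r) :
    ∃ v : Finset V → ℝ, IsMonotoneVal v ∧
      ∀ A : Fin n → Finset V, IsConnAlloc G A →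
        ¬ IsEF1 (fun _ : Fin n => v) A ∧ ¬ IsEF1Outer G (fun _ : Fin n => v) A :=
  cutset_blocks_EF1_monotone_general G cs n hn₁ hn₂
end

section
/- Let G = (V,E) be a finite connected graph with a generalized cutset C = {C_1, ..., C_t} and witness partition H = {H_1, ..., H_{Στ+r}}. Then every subset A ⊆ V that induces a connected subgraph of G and contains vertices belonging to two distinct parts of H dominates some member of C. Consequently, in every connected allocation, a privileged agent is never deprived. -/
open Finset

variable {V : Type*}

/-!
Suppose the connected set `S` dominates no member of the cutset. Then `S` avoids every singleton
member, and meets each type-II member in at most one contact vertex, which sees a single part of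
`H`. Label every vertex by the parts it "sees": its own part if it lies in some `H j`, and otherwise
the parts adjacent to the contact vertices that `S` picks in its member. Independence of the parts
and of the type-II members makes this label constant along the edges inside `S`, so by connectivity
the two vertices of `S` lying in `H j` and `H k` carry the same label `{j} = {k}`.
-/

theorem SimpleGraph.Reachable.eq_of_forall_adj_eq {β : Type*} {G : SimpleGraph V} {f : V → β}
    (hf : ∀ u v, G.Adj u v → f u = f v) {u v : V} (h : G.Reachable u v) : f u = f v := by
  obtain ⟨p⟩ := h
  induction p with
  | nil => rfl
  | cons hadj _ ih => exact (hf _ _ hadj).trans ih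

namespace GenCutset

variable {G : SimpleGraph V} (cs : GenCutset G)

theorem eq_of_mem_H {v : V} {j k : Fin (cs.valence + cs.r)} (hj : v ∈ cs.H j) (hk : v ∈ cs.H k) :
    j = k := by
  by_contra hjk
  exact Finset.disjoint_left.mp (cs.H_disjoint j k hjk) hj hk

theorem eq_of_mem_C {v : V} {i i' : Fin cs.t} (hi : v ∈ cs.C i) (hi' : v ∈ cs.C i') : i = i' := by
  by_contra hii
  exact Finset.disjoint_left.mp (cs.C_disjoint i i' hii) hi hi'

theorem not_mem_C_of_mem_H {v : V} {j : Fin (cs.valence + cs.r)} (hj : v ∈ cs.H j) (i : Fin cs.t) :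
    v ∉ cs.C i :=
  (cs.H_partition v).mpr ⟨j, hj⟩ i

theorem exists_mem_C_of_forall_not_mem_H {v : V} (hv : ∀ j, v ∉ cs.H j) : ∃ i, v ∈ cs.C i := by
  by_contra! h
  obtain ⟨j, hj⟩ := (cs.H_partition v).mp h
  exact hv j hj

theorem one_lt_card_C_of_not_dominates {S : Finset V} {i : Fin cs.t} (hS : ¬ cs.Dominates S i)
    {v : V} (hvS : v ∈ S) (hvC : v ∈ cs.C i) : 1 < (cs.C i).card := by
  by_contra! hcard
  have hone : (cs.C i).card = 1 := le_antisymm hcard (cs.C_nonempty i).card_pos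
  obtain ⟨a, ha⟩ := Finset.card_eq_one.mp hone
  refine hS (Or.inl ⟨hone, ?_⟩)
  rw [ha, Finset.mem_singleton] at hvC
  rw [ha, Finset.singleton_subset_iff, ← hvC]
  exact hvS

theorem eq_of_contacts_of_not_dominates {S : Finset V} {i : Fin cs.t} (hS : ¬ cs.Dominates S i)
    (hcard : 1 < (cs.C i).card) {c c' : V} (hc : c ∈ cs.C i) (hcS : c ∈ S)
    (hc' : c' ∈ cs.C i) (hc'S : c' ∈ S) {j j' : Fin (cs.valence + cs.r)}
    (hcj : ∃ z ∈ cs.H j, G.Adj c z) (hc'j' : ∃ z ∈ cs.H j', G.Adj c' z) : c = c' := by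
  by_contra hne
  exact hS (Or.inr ⟨hcard, c, hc, hcS, c', hc', hc'S, hne, ⟨j, hcj⟩, ⟨j', hc'j'⟩⟩)

def partsSeen (S : Finset V) (v : V) : Set (Fin (cs.valence + cs.r)) :=
  {j | v ∈ cs.H j ∨ ∃ i, v ∈ cs.C i ∧ ∃ c ∈ cs.C i, c ∈ S ∧ ∃ z ∈ cs.H j, G.Adj c z}

theorem partsSeen_of_mem_H (S : Finset V) {v : V} {j : Fin (cs.valence + cs.r)}
    (hj : v ∈ cs.H j) : cs.partsSeen S v = {j} := by
  ext k
  simp only [partsSeen, Set.mem_ofPred_eq, Set.mem_singleton_iff]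
  constructor
  · rintro (hk | ⟨i, hi, -⟩)
    · exact cs.eq_of_mem_H hk hj
    · exact absurd hi (cs.not_mem_C_of_mem_H hj i)
  · rintro rfl
    exact Or.inl hj

theorem partsSeen_of_mem_C (S : Finset V) {v : V} {i : Fin cs.t} (hi : v ∈ cs.C i) :
    cs.partsSeen S v = {j | ∃ c ∈ cs.C i, c ∈ S ∧ ∃ z ∈ cs.H j, G.Adj c z} := by
  ext k
  simp only [partsSeen, Set.mem_ofPred_eq]
  constructor
  · rintro (hk | ⟨i', hi', hseen⟩)
    · exact absurd hi (cs.not_mem_C_of_mem_H hk i)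
    · exact cs.eq_of_mem_C hi hi' ▸ hseen
  · exact fun hseen => Or.inr ⟨i, hi, hseen⟩

theorem partsSeen_of_adj_mem_H {S : Finset V} (hS : ∀ i, ¬ cs.Dominates S i) {u v : V}
    (hvS : v ∈ S) {i : Fin cs.t} (hi : v ∈ cs.C i) {j : Fin (cs.valence + cs.r)}
    (hj : u ∈ cs.H j) (hadj : G.Adj v u) : cs.partsSeen S v = {j} := by
  have hcard := cs.one_lt_card_C_of_not_dominates (hS i) hvS hi
  rw [cs.partsSeen_of_mem_C S hi]
  ext k
  simp only [Set.mem_ofPred_eq, Set.mem_singleton_iff]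
  constructor
  · rintro ⟨c, hc, hcS, hck⟩
    -- `v` is the only contact vertex of `C i` in `S`, and a contact vertex sees a single part.
    have hcv : c = v :=
      cs.eq_of_contacts_of_not_dominates (hS i) hcard hc hcS hi hvS hck ⟨u, hj, hadj⟩
    subst hcv
    exact (cs.typeII_contacts i hcard).2 c hc k j hck ⟨u, hj, hadj⟩
  · rintro rfl
    exact ⟨v, hi, hvS, u, hj, hadj⟩

theorem partsSeen_eq_of_adj {S : Finset V} (hS : ∀ i, ¬ cs.Dominates S i) {u v : V}
    (huS : u ∈ S) (hvS : v ∈ S) (hadj : G.Adj u v) : cs.partsSeen S u = cs.partsSeen S v := by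
  by_cases hu : ∃ j, u ∈ cs.H j
  · obtain ⟨j, hj⟩ := hu
    rw [cs.partsSeen_of_mem_H S hj]
    by_cases hv : ∃ k, v ∈ cs.H k
    · obtain ⟨k, hk⟩ := hv
      rw [cs.partsSeen_of_mem_H S hk, Set.singleton_eq_singleton_iff]
      by_contra hjk
      exact cs.H_independent j k hjk u hj v hk hadj
    · obtain ⟨i, hi⟩ := cs.exists_mem_C_of_forall_not_mem_H (not_exists.mp hv)
      exact (cs.partsSeen_of_adj_mem_H hS hvS hi hj hadj.symm).symm
  · obtain ⟨i, hi⟩ := cs.exists_mem_C_of_forall_not_mem_H (not_exists.mp hu)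
    by_cases hv : ∃ k, v ∈ cs.H k
    · obtain ⟨k, hk⟩ := hv
      rw [cs.partsSeen_of_adj_mem_H hS huS hi hk hadj, cs.partsSeen_of_mem_H S hk]
    · obtain ⟨i', hi'⟩ := cs.exists_mem_C_of_forall_not_mem_H (not_exists.mp hv)
      have hii' : i = i' := by
        by_contra hne
        exact cs.typeII_indep i i' hne (cs.one_lt_card_C_of_not_dominates (hS i) huS hi)
          (cs.one_lt_card_C_of_not_dominates (hS i') hvS hi') u hi v hi' hadj
      subst hii'
      rw [cs.partsSeen_of_mem_C S hi, cs.partsSeen_of_mem_C S hi']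

end GenCutset

theorem connected_set_meeting_two_parts_dominates_general {V : Type*}
    (G : SimpleGraph V) (cs : GenCutset G) :
    ∀ S : Finset V, (G.induce (S : Set V)).Connected →
      (∃ j k : Fin (cs.valence + cs.r), j ≠ k ∧
        (∃ x ∈ S, x ∈ cs.H j) ∧ (∃ y ∈ S, y ∈ cs.H k)) →
      ∃ i : Fin cs.t, cs.Dominates S i := by
  rintro S hS ⟨j, k, hjk, ⟨x, hxS, hxj⟩, ⟨y, hyS, hyk⟩⟩
  by_contra! hdom
  have hseen : cs.partsSeen S x = cs.partsSeen S y :=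
    (hS.preconnected ⟨x, hxS⟩ ⟨y, hyS⟩).eq_of_forall_adj_eq
      (f := fun v : (S : Set V) => cs.partsSeen S v) fun u v hadj =>
        cs.partsSeen_eq_of_adj hdom u.2 v.2 (SimpleGraph.induce_adj.mp hadj)
  rw [cs.partsSeen_of_mem_H S hxj, cs.partsSeen_of_mem_H S hyk,
    Set.singleton_eq_singleton_iff] at hseen
  exact hjk hseen

/-- Every connected subset of vertices meeting two distinct parts of the
witness partition dominates some member of the cutset; consequently, in every connected
allocation a privileged agent is never deprived. -/
theorem connected_set_meeting_two_parts_dominates {V : Type*} [Fintype V] [DecidableEq V]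
    (G : SimpleGraph V) (hG : G.Connected) (cs : GenCutset G) :
    ∀ S : Finset V, (G.induce (S : Set V)).Connected →
      (∃ j k : Fin (cs.valence + cs.r), j ≠ k ∧
        (∃ x ∈ S, x ∈ cs.H j) ∧ (∃ y ∈ S, y ∈ cs.H k)) →
      ∃ i : Fin cs.t, cs.Dominates S i :=
  connected_set_meeting_two_parts_dominates_general G cs
end
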